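/- arXiv:1108.0034 — 2 statements merged into one kernel-verified Lean document; each statement's English description precedes it below -/
import Mathlib

section
/- Let β > 0, 0 ≤ λ < β²/4, set α̃ := β/2 − √(β²/4 − λ), let c₁ > 0 and δ > 0, and fix ε with 0 < ε < δ. Define w(r) := exp(α̃r − (log r)^(−ε)) for r > 1. If m : (1,∞) → ℝ satisfies m(r) ≤ −β + c₁/(r(log r)^(1+δ)) for r ≥ r₀ > 1, then there exists r₁ ≥ r₀ such that −w''(r) − m(r)w'(r) − λw(r) ≥ 0 for all r ≥ r₁. -/
/-!
Write `w = exp ∘ f` with `f r = α̃ r - (log r) ^ (-ε)`, so that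
`-w'' - m w' - λ w = (-f'' - f'² - m f' - λ) w`. Here `f' = α̃ + u` with
`u r = ε (log r) ^ (-ε - 1) / r` positive and decreasing, and the error term of `m` factors as
`c₁ / (r (log r) ^ (1 + δ)) = u h` with `h r = (c₁ / ε) (log r) ^ (ε - δ) → 0` because `ε < δ`.
As `α̃` is a root of `-α² + β α - λ` with `β - 2 α̃ = 2 s`, `s = √(β² / 4 - λ) > 0`, the bracket
is at least `u (2 s - u - h α̃ - h u)`, which is positive once `u` and `h` are small.
-/

open Real Filter Topology

theorem tendsto_log_rpow_div_atTop (q : ℝ) :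
    Tendsto (fun x => log x ^ q / x) atTop (𝓝 0) := by
  simpa only [rpow_one] using (isLittleO_log_rpow_rpow_atTop q one_pos).tendsto_div_nhds_zero

theorem tendsto_log_rpow_atTop_of_neg {q : ℝ} (hq : q < 0) :
    Tendsto (fun x => log x ^ q) atTop (𝓝 0) := by
  have := (tendsto_rpow_neg_atTop (neg_pos.2 hq)).comp tendsto_log_atTop
  rwa [neg_neg] at this

theorem eventually_log_correction_lt {ε δ : ℝ} (hεδ : ε < δ) (a b : ℝ) {s : ℝ} (hs : 0 < s) :
    ∀ᶠ r in atTop, ε * (log r ^ (-ε - 1) / r) + b * log r ^ (ε - δ) * a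
      + b * log r ^ (ε - δ) * (ε * (log r ^ (-ε - 1) / r)) < s := by
  have hu : Tendsto (fun r => ε * (log r ^ (-ε - 1) / r)) atTop (𝓝 0) := by
    simpa using (tendsto_log_rpow_div_atTop _).const_mul ε
  have hh : Tendsto (fun r => b * log r ^ (ε - δ)) atTop (𝓝 0) := by
    simpa using (tendsto_log_rpow_atTop_of_neg (sub_neg.2 hεδ)).const_mul b
  refine Tendsto.eventually_lt_const hs ?_
  simpa using (hu.add (hh.mul_const a)).add (hh.mul hu)

theorem hasDerivAt_log_rpow (p : ℝ) {r : ℝ} (hr : log r ≠ 0) :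
    HasDerivAt (fun x => log x ^ p) (p * log r ^ (p - 1) / r) r := by
  have hr0 : r ≠ 0 := by rintro rfl; exact hr log_zero
  convert (hasDerivAt_log hr0).rpow_const (p := p) (Or.inl hr) using 1
  ring

theorem hasDerivAt_log_rpow_div_of_nonpos {p r : ℝ} (hp : p ≤ 0) (hr : 1 < r) :
    ∃ d ≤ 0, HasDerivAt (fun x => log x ^ p / x) d r := by
  have hL := log_pos hr
  refine ⟨_, ?_, (hasDerivAt_log_rpow p hL.ne').div (hasDerivAt_id r) (by positivity)⟩
  have hcancel : p * log r ^ (p - 1) / r * r = p * log r ^ (p - 1) :=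
    div_mul_cancel₀ _ (by positivity)
  have hfirst : p * log r ^ (p - 1) ≤ 0 := mul_nonpos_of_nonpos_of_nonneg hp (by positivity)
  have hsecond : 0 < log r ^ p := by positivity
  simp only [mul_one, hcancel]
  exact div_nonpos_of_nonpos_of_nonneg (by linarith) (by positivity)

theorem hasDerivAt_mul_sub_log_rpow_neg (α ε : ℝ) {r : ℝ} (hr : log r ≠ 0) :
    HasDerivAt (fun x => α * x - log x ^ (-ε)) (α + ε * (log r ^ (-ε - 1) / r)) r :=
  (((hasDerivAt_id' r).const_mul α).sub (hasDerivAt_log_rpow (-ε) hr)).congr_deriv (by ring)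

theorem div_mul_log_rpow_eq (c : ℝ) {ε : ℝ} (δ : ℝ) (hε : ε ≠ 0) {r : ℝ} (hr : 1 < r) :
    c / (r * log r ^ (1 + δ)) = ε * (log r ^ (-ε - 1) / r) * (c / ε * log r ^ (ε - δ)) := by
  have hL := log_pos hr
  have hexp : log r ^ (-ε - 1) * log r ^ (ε - δ) = (log r ^ (1 + δ))⁻¹ := by
    rw [← rpow_add hL, ← rpow_neg hL.le]; ring_nf
  calc c / (r * log r ^ (1 + δ)) = c * (log r ^ (-ε - 1) * log r ^ (ε - δ)) / r := by
        rw [hexp]; ring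
    _ = _ := by field_simp

theorem deriv_deriv_exp_comp {f f' : ℝ → ℝ} {f'' r : ℝ}
    (hf : ∀ᶠ x in 𝓝 r, HasDerivAt f (f' x) x) (hf' : HasDerivAt f' f'' r) :
    deriv (deriv fun x => exp (f x)) r = (f'' + f' r ^ 2) * exp (f r) := by
  have hderiv : deriv (fun x => exp (f x)) =ᶠ[𝓝 r] fun x => exp (f x) * f' x :=
    hf.mono fun x hx => hx.exp.deriv
  have hprod : HasDerivAt (fun x => exp (f x) * f' x)
      (exp (f r) * f' r * f' r + exp (f r) * f'') r := hf.self_of_nhds.exp.mul hf'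
  rw [hderiv.deriv_eq, hprod.deriv]
  ring

theorem riccati_nonneg {β lam α s u h m ψ : ℝ} (hα : 0 ≤ α) (hu : 0 < u)
    (hroot : -α ^ 2 + β * α - lam = 0) (hs : 2 * α - β = -(2 * s)) (hψ : ψ ≤ 0)
    (hm : m ≤ -β + u * h) (hsmall : u + h * α + h * u ≤ 2 * s) :
    0 ≤ -ψ - (α + u) ^ 2 - m * (α + u) - lam := by
  have hmφ : m * (α + u) ≤ (-β + u * h) * (α + u) :=
    mul_le_mul_of_nonneg_right hm (by linarith)
  have hgap : 0 ≤ u * (2 * s - (u + h * α + h * u)) := mul_nonneg hu.le (by linarith)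
  nlinarith

theorem stmt4_general (β lam c₁ δ ε r₀ : ℝ) (m : ℝ → ℝ)
    (hβ : 0 < β) (hlam0 : 0 ≤ lam) (hlam : lam < β^2/4)
    (hε : 0 < ε) (hεδ : ε < δ)
    (α' : ℝ) (hα : α' = β/2 - Real.sqrt (β^2/4 - lam))
    (w : ℝ → ℝ) (hw : ∀ r, w r = Real.exp (α'*r - (Real.log r)^(-ε)))
    (hm : ∀ r, r₀ ≤ r → m r ≤ -β + c₁/(r*(Real.log r)^(1+δ))) :
    ∃ r₁, r₀ ≤ r₁ ∧ ∀ r, r₁ ≤ r →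
      0 ≤ -(deriv (deriv w) r) - m r * deriv w r - lam * w r := by
  set s := √(β ^ 2 / 4 - lam)
  have hs : 0 < s := sqrt_pos.2 (by linarith)
  have hs2 : s ^ 2 = β ^ 2 / 4 - lam := sq_sqrt (by linarith)
  have hα0 : 0 ≤ α' := by
    rw [hα, sub_nonneg, sqrt_le_left (by positivity)]; linarith
  obtain ⟨a, ha⟩ := eventually_atTop.1 <|
    (eventually_log_correction_lt hεδ α' (c₁ / ε) (by positivity : 0 < 2 * s)).and
      (eventually_gt_atTop 1)
  refine ⟨max a r₀, le_max_right _ _, fun r hr => ?_⟩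
  obtain ⟨hsmall, hr1⟩ := ha r (le_of_max_le_left hr)
  obtain ⟨d, hd, hderiv⟩ := hasDerivAt_log_rpow_div_of_nonpos (p := -ε - 1) (by linarith) hr1
  have hphase : ∀ᶠ x in 𝓝 r, HasDerivAt (fun x => α' * x - log x ^ (-ε))
      (α' + ε * (log x ^ (-ε - 1) / x)) x :=
    (lt_mem_nhds hr1).mono fun x hx => hasDerivAt_mul_sub_log_rpow_neg α' ε (log_pos hx).ne'
  have hu : 0 < ε * (log r ^ (-ε - 1) / r) := by have := log_pos hr1; positivity
  have key := riccati_nonneg (β := β) (lam := lam) hα0 hu (by rw [hα]; nlinarith)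
    (by rw [hα]; ring) (mul_nonpos_of_nonneg_of_nonpos hε.le hd)
    ((hm r (le_of_max_le_right hr)).trans_eq (by rw [div_mul_log_rpow_eq c₁ δ hε.ne' hr1]))
    hsmall.le
  rw [funext hw, deriv_deriv_exp_comp hphase ((hderiv.const_mul ε).const_add α'),
    (hphase.self_of_nhds.exp).deriv]
  calc (0 : ℝ) ≤ _ * exp (α' * r - log r ^ (-ε)) := mul_nonneg key (exp_pos _).le
    _ = _ := by ring

theorem stmt4 (β lam c₁ δ ε r₀ : ℝ) (m : ℝ → ℝ)
    (hβ : 0 < β) (hlam0 : 0 ≤ lam) (hlam : lam < β^2/4)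
    (hc₁ : 0 < c₁) (hδ : 0 < δ) (hε : 0 < ε) (hεδ : ε < δ) (hr₀ : 1 < r₀)
    (α' : ℝ) (hα : α' = β/2 - Real.sqrt (β^2/4 - lam))
    (w : ℝ → ℝ) (hw : ∀ r, w r = Real.exp (α'*r - (Real.log r)^(-ε)))
    (hm : ∀ r, r₀ ≤ r → m r ≤ -β + c₁/(r*(Real.log r)^(1+δ))) :
    ∃ r₁, r₀ ≤ r₁ ∧ ∀ r, r₁ ≤ r →
      0 ≤ -(deriv (deriv w) r) - m r * deriv w r - lam * w r :=
  stmt4_general β lam c₁ δ ε r₀ m hβ hlam0 hlam hε hεδ α' hα w hw hm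
end

section
/- Let c > 0, 0 ≤ λ < c²/4, α := c/2 + √(c²/4 − λ), β₈ > 0, 0 < θ < 1, and ε > 0. Define u(r) := exp(−αr − β₈ r^{1−θ}) for r > 0. If m : (0,∞) → ℝ satisfies m(r) ≥ c + ((2α − c)(1−θ)β₈ + ε)/(α r^θ) for all r ≥ r₀ > 0, then there exists r₁ ≥ r₀ such that −u''(r) − m(r)u'(r) − λu(r) ≥ 0 for all r ≥ r₁. -/
/-!
Write `u = exp φ` with `φ r = -α r - β r^(1-θ)` and `p = -φ' = α + β(1-θ) r^(-θ) > 0`. Then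
`-u'' - m u' - λ u = u · (m p - p² - λ - φ'')`. Inserting the lower bound on `m` and using
`α² - cα + λ = 0`, the constant and the `r^(-θ)` terms of `α (m p - p² - λ)` cancel except for
`ε α r^(-θ)`, while `φ'' = β(1-θ)θ r^(-θ-1)` and the `r^(-2θ)` term are of lower order. So the
bracket is eventually positive.
-/

open Real Filter Topology

noncomputable def barrier (α β θ r : ℝ) : ℝ := exp (-α * r - β * r ^ (1 - θ))

section Barrier

variable {α β θ r : ℝ}

theorem hasDerivAt_barrier (hr : 0 < r) :
    HasDerivAt (barrier α β θ) (-(α + β * (1 - θ) * r ^ (-θ)) * barrier α β θ r) r := by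
  have hpow : HasDerivAt (fun x : ℝ => x ^ (1 - θ)) ((1 - θ) * r ^ (1 - θ - 1)) r :=
    hasDerivAt_rpow_const (Or.inl hr.ne')
  have hphi :
      HasDerivAt (fun x => -α * x - β * x ^ (1 - θ)) (-(α + β * (1 - θ) * r ^ (-θ))) r := by
    rw [show (1 : ℝ) - θ - 1 = -θ by ring] at hpow
    exact (((hasDerivAt_id r).const_mul (-α)).sub (hpow.const_mul β)).congr_deriv (by ring)
  exact hphi.exp.congr_deriv (mul_comm _ _)

theorem hasDerivAt_deriv_barrier (hr : 0 < r) :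
    HasDerivAt (deriv (barrier α β θ))
      (((α + β * (1 - θ) * r ^ (-θ)) ^ 2 + β * (1 - θ) * θ * (r ^ (-θ) / r)) * barrier α β θ r)
      r := by
  have hderiv : (fun x => -(α + β * (1 - θ) * x ^ (-θ)) * barrier α β θ x)
      =ᶠ[𝓝 r] deriv (barrier α β θ) :=
    eventually_of_mem (Ioi_mem_nhds hr) fun x hx => (hasDerivAt_barrier hx).deriv.symm
  have hpow : HasDerivAt (fun x : ℝ => x ^ (-θ)) (-θ * r ^ (-θ - 1)) r :=
    hasDerivAt_rpow_const (Or.inl hr.ne')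
  have hprod := (((hasDerivAt_const r α).add (hpow.const_mul (β * (1 - θ)))).neg).mul
    (hasDerivAt_barrier (α := α) (β := β) (θ := θ) hr)
  rw [rpow_sub_one hr.ne'] at hprod
  refine (hprod.congr_of_eventuallyEq hderiv.symm).congr_deriv ?_
  simp only [Pi.neg_apply, Pi.add_apply]
  ring

theorem barrier_operator_eq (hr : 0 < r) (m lam : ℝ) :
    -deriv (deriv (barrier α β θ)) r - m * deriv (barrier α β θ) r - lam * barrier α β θ r =
      (m * (α + β * (1 - θ) * r ^ (-θ)) - (α + β * (1 - θ) * r ^ (-θ)) ^ 2 - lam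
        - β * (1 - θ) * θ * (r ^ (-θ) / r)) * barrier α β θ r := by
  rw [(hasDerivAt_deriv_barrier hr).deriv, (hasDerivAt_barrier hr).deriv]
  ring

end Barrier

/-- With `p = α + b t`, `t = r^(-θ)` and `s = r⁻¹`, this is the cancellation in
`α (m p - p² - λ - bθ t s)` coming from `α² - cα + λ = 0`. -/
theorem barrier_bracket_lower_bound {c lam α b θ ε m t s : ℝ} (hquad : α ^ 2 - c * α + lam = 0)
    (hp : 0 ≤ α + b * t) (hm : c * α + ((2 * α - c) * b + ε) * t ≤ α * m) :
    t * (α * ε + (((2 * α - c) * b + ε) * b - α * b ^ 2) * t - α * b * θ * s) ≤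
      α * (m * (α + b * t) - (α + b * t) ^ 2 - lam - b * θ * (t * s)) := by
  linear_combination mul_le_mul_of_nonneg_right hm hp + α * hquad

theorem eventually_pos_add_mul_rpow_neg_sub_mul_inv {θ a : ℝ} (hθ : 0 < θ) (ha : 0 < a)
    (K L : ℝ) : ∀ᶠ r in atTop, 0 < a + K * r ^ (-θ) - L * r⁻¹ := by
  have hlim : Tendsto (fun r : ℝ => a + K * r ^ (-θ) - L * r⁻¹) atTop (𝓝 a) := by
    simpa using ((tendsto_rpow_neg_atTop hθ).const_mul K).const_add a |>.sub
      (tendsto_inv_atTop_zero.const_mul L)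
  exact hlim.eventually_const_lt ha

theorem barrier_supersolution {c lam α β θ ε m r : ℝ} (hα : 0 < α)
    (hquad : α ^ 2 - c * α + lam = 0) (hβ : 0 ≤ β) (hθ : θ < 1) (hr : 0 < r)
    (hm : c + ((2 * α - c) * (1 - θ) * β + ε) / (α * r ^ θ) ≤ m)
    (hrem : 0 < α * ε
      + (((2 * α - c) * (β * (1 - θ)) + ε) * (β * (1 - θ)) - α * (β * (1 - θ)) ^ 2) * r ^ (-θ)
      - α * (β * (1 - θ)) * θ * r⁻¹) :
    0 ≤ -deriv (deriv (barrier α β θ)) r - m * deriv (barrier α β θ) r - lam * barrier α β θ r := by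
  have ht : 0 < r ^ (-θ) := rpow_pos_of_pos hr _
  have hp : 0 ≤ α + β * (1 - θ) * r ^ (-θ) := by
    have : 0 ≤ 1 - θ := by linarith
    positivity
  have hm' : c * α + ((2 * α - c) * (β * (1 - θ)) + ε) * r ^ (-θ) ≤ α * m := by
    calc c * α + ((2 * α - c) * (β * (1 - θ)) + ε) * r ^ (-θ)
        = α * (c + ((2 * α - c) * (1 - θ) * β + ε) / (α * r ^ θ)) := by
          rw [rpow_neg hr.le]
          field_simp
      _ ≤ α * m := by gcongr
  have hbracket := barrier_bracket_lower_bound (θ := θ) (s := r⁻¹) hquad hp hm'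
  rw [barrier_operator_eq hr, div_eq_mul_inv]
  refine mul_nonneg ((mul_nonneg_iff_of_pos_left hα).1 ?_) (exp_pos _).le
  exact (mul_pos ht hrem).le.trans hbracket

theorem stmt15_general (c lam β₈ θ ε r₀ : ℝ) (m : ℝ → ℝ)
    (hc : 0 < c) (hlam : lam < c^2/4)
    (hβ : 0 < β₈) (hθ0 : 0 < θ) (hθ1 : θ < 1) (hε : 0 < ε)
    (α : ℝ) (hα : α = c/2 + Real.sqrt (c^2/4 - lam))
    (u : ℝ → ℝ) (hu : ∀ r, u r = Real.exp (-α*r - β₈*r^(1-θ)))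
    (hm : ∀ r, r₀ ≤ r → c + ((2*α - c)*(1-θ)*β₈ + ε)/(α*r^θ) ≤ m r) :
    ∃ r₁, r₀ ≤ r₁ ∧ ∀ r, r₁ ≤ r →
      0 ≤ -(deriv (deriv u) r) - m r * deriv u r - lam * u r := by
  obtain rfl : u = barrier α β₈ θ := funext hu
  have hsqrt := sq_sqrt (show 0 ≤ c ^ 2 / 4 - lam by linarith)
  have hα₀ : 0 < α := by rw [hα]; positivity
  have hquad : α ^ 2 - c * α + lam = 0 := by rw [hα]; linear_combination hsqrt
  have hsuper : ∀ᶠ r in atTop,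
      0 ≤ -deriv (deriv (barrier α β₈ θ)) r - m r * deriv (barrier α β₈ θ) r
        - lam * barrier α β₈ θ r := by
    filter_upwards [eventually_ge_atTop r₀, eventually_gt_atTop 0,
      eventually_pos_add_mul_rpow_neg_sub_mul_inv hθ0 (mul_pos hα₀ hε) _ _] with r hr₀r hr hrem
    exact barrier_supersolution hα₀ hquad hβ.le hθ1 hr (hm r hr₀r) hrem
  obtain ⟨a, ha⟩ := eventually_atTop.1 hsuper
  exact ⟨max r₀ a, le_max_left _ _, fun r hr => ha r (le_of_max_le_right hr)⟩

theorem stmt15 (c lam β₈ θ ε r₀ : ℝ) (m : ℝ → ℝ)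
    (hc : 0 < c) (hlam0 : 0 ≤ lam) (hlam : lam < c^2/4)
    (hβ : 0 < β₈) (hθ0 : 0 < θ) (hθ1 : θ < 1) (hε : 0 < ε) (hr₀ : 0 < r₀)
    (α : ℝ) (hα : α = c/2 + Real.sqrt (c^2/4 - lam))
    (u : ℝ → ℝ) (hu : ∀ r, u r = Real.exp (-α*r - β₈*r^(1-θ)))
    (hm : ∀ r, r₀ ≤ r → c + ((2*α - c)*(1-θ)*β₈ + ε)/(α*r^θ) ≤ m r) :
    ∃ r₁, r₀ ≤ r₁ ∧ ∀ r, r₁ ≤ r →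
      0 ≤ -(deriv (deriv u) r) - m r * deriv u r - lam * u r :=
  stmt15_general c lam β₈ θ ε r₀ m hc hlam hβ hθ0 hθ1 hε α hα u hu hm
end
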